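/- arXiv:1507.08759 — 2 statements merged into one kernel-verified Lean document; each statement's English description precedes it below -/
import Mathlib

section
/- Let $u \in \mathcal{E}(\mathcal{U}^o_\beta)$ be a compact Lyapunov function on $E$ (i.e., $[u \leq n]$ is relatively compact for all $n \in \mathbb{N}^*$). Then the function $l_{1+u}: \widehat{E} \to [0,\infty]$, $l_{1+u}(\mu) = \mu(E) + \int u\,d\mu$, has relatively compact sublevel sets in $\widehat{E}$: for each $n$, $[l_{1+u} \leq n] \subseteq E^{(0)} \cup K_n \cup K_n^{(2)} \cup \cdots \cup K_n^{(n)}$ where $K_n$ is a compact set containing $[u \leq n]$, and the latter union is compact in $\widehat{E}$. -/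
/-!
Every point of a configuration `μ` contributes at least `1` and at least `1 + u x` to
`l_{1+u}(μ)`, so `l_{1+u}(μ) ≤ n` forces at most `n` points, all in `[u ≤ n] ⊆ K n`.
Configurations of at most `n` points of a compact `K` are the image under the quotient map of
the lists of length at most `n` with entries in `K`, which form a compact set because such a
list is either empty or `a :: l` with `a ∈ K` and `l` one entry shorter.
-/

noncomputable section

/-- The space of finite configurations `Ê = ⋃_m E^{(m)}` is modelled by finite multisets,
topologized as the quotient of the space of finite sequences; this is the disjoint union of
the symmetric powers `E^{(m)}` with their quotient topologies. -/
instance confTop (E : Type*) [TopologicalSpace E] : TopologicalSpace (Multiset E) :=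
  inferInstanceAs (TopologicalSpace (Quotient (List.isSetoid E)))

/-- `l_f(μ) = ∫ f dμ` for a finite configuration `μ`. -/
def lf {E : Type*} (f : E → ℝ) (μ : Multiset E) : ℝ := (μ.map f).sum

section

variable {E : Type*}

theorem List.isCompact_setOf_length_le [TopologicalSpace E] {K : Set E} (hK : IsCompact K)
    (n : ℕ) : IsCompact {l : List E | l.length ≤ n ∧ ∀ x ∈ l, x ∈ K} := by
  induction n with
  | zero =>
    convert isCompact_singleton (x := ([] : List E)) using 1
    ext (_ | _) <;> simp
  | succ n ih =>
    have h : {l : List E | l.length ≤ n + 1 ∧ ∀ x ∈ l, x ∈ K} =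
        insert [] ((fun p : E × List E => p.1 :: p.2) ''
          (K ×ˢ {l | l.length ≤ n ∧ ∀ x ∈ l, x ∈ K})) := by
      ext (_ | ⟨a, l⟩) <;> simp [and_assoc, and_left_comm]
    rw [h]
    exact ((hK.prod ih).image continuous_cons).insert []

theorem Multiset.isCompact_setOf_card_le [TopologicalSpace E] {K : Set E} (hK : IsCompact K)
    (n : ℕ) : IsCompact {μ : Multiset E | Multiset.card μ ≤ n ∧ ∀ x ∈ μ, x ∈ K} := by
  have h : {μ : Multiset E | Multiset.card μ ≤ n ∧ ∀ x ∈ μ, x ∈ K} =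
      ((↑) : List E → Multiset E) '' {l | l.length ≤ n ∧ ∀ x ∈ l, x ∈ K} := by
    ext μ
    induction μ using Quotient.inductionOn with
    | h l => exact ⟨fun hl => ⟨l, by simpa using hl, rfl⟩, fun ⟨l', hl', hperm⟩ => by
        rw [← hperm]; simpa using hl'⟩
  rw [h]
  exact (List.isCompact_setOf_length_le hK n).image continuous_quot_mk

theorem card_le_lf {f : E → ℝ} (hf : ∀ x, 1 ≤ f x) (μ : Multiset E) :
    (Multiset.card μ : ℝ) ≤ lf f μ := by
  have h := Multiset.card_nsmul_le_sum (s := μ.map f) (a := 1) (by simpa using fun x _ => hf x)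
  rwa [Multiset.card_map, nsmul_one] at h

theorem le_lf_of_mem {f : E → ℝ} (hf : ∀ x, 0 ≤ f x) {μ : Multiset E} {x : E} (hx : x ∈ μ) :
    f x ≤ lf f μ :=
  Multiset.single_le_sum (by simpa using fun x _ => hf x) _ (Multiset.mem_map_of_mem f hx)

end

theorem stmt13_general {E : Type*} [TopologicalSpace E]
    (u : E → ℝ) (hu0 : ∀ x, 0 ≤ u x)
    (K : ℕ → Set E) (hKcpt : ∀ n, IsCompact (K n)) (hK : ∀ n : ℕ, {x : E | u x ≤ (n : ℝ)} ⊆ K n) :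
    ∀ n : ℕ, 0 < n →
      {μ : Multiset E | lf (fun x => 1 + u x) μ ≤ (n : ℝ)} ⊆
          {μ : Multiset E | Multiset.card μ ≤ n ∧ ∀ x ∈ μ, x ∈ K n} ∧
        IsCompact {μ : Multiset E | Multiset.card μ ≤ n ∧ ∀ x ∈ μ, x ∈ K n} := by
  intro n _
  refine ⟨fun μ hμ => ⟨?_, fun x hx => hK n ?_⟩, Multiset.isCompact_setOf_card_le (hKcpt n) n⟩
  · exact_mod_cast (card_le_lf (fun x => le_add_of_nonneg_right (hu0 x)) μ).trans hμ
  · have hx_le := (le_lf_of_mem (fun x => add_nonneg zero_le_one (hu0 x)) hx).trans hμ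
    change u x ≤ n
    linarith

/-- if `u ≥ 0` is Borel with relatively compact sublevel sets (a compact
Lyapunov function), and `K n` is a compact set containing `[u ≤ n]`, then the sublevel set
`[l_{1+u} ≤ n]` in the configuration space is contained in
`E^{(0)} ∪ K_n ∪ K_n^{(2)} ∪ ⋯ ∪ K_n^{(n)}` — the set of configurations with at most `n`
points, all lying in `K n` — and the latter set is compact; hence `l_{1+u}` has relatively
compact sublevel sets. -/
theorem stmt13 {E : Type*} [TopologicalSpace E] [MeasurableSpace E] [BorelSpace E]
    (u : E → ℝ) (hum : Measurable u) (hu0 : ∀ x, 0 ≤ u x)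
    (hrel : ∀ n : ℕ, 0 < n → IsCompact (closure {x : E | u x ≤ (n : ℝ)}))
    (K : ℕ → Set E) (hKcpt : ∀ n, IsCompact (K n)) (hK : ∀ n : ℕ, {x : E | u x ≤ (n : ℝ)} ⊆ K n) :
    ∀ n : ℕ, 0 < n →
      {μ : Multiset E | lf (fun x => 1 + u x) μ ≤ (n : ℝ)} ⊆
          {μ : Multiset E | Multiset.card μ ≤ n ∧ ∀ x ∈ μ, x ∈ K n} ∧
        IsCompact {μ : Multiset E | Multiset.card μ ≤ n ∧ ∀ x ∈ μ, x ∈ K n} :=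
  stmt13_general u hu0 K hKcpt hK

end
end

section
/- Let $\mathcal{U} = (U_\alpha)_{\alpha>0}$ be a sub-Markovian resolvent on a Lusin space $E$ satisfying that all points are non-branch points w.r.t. $\mathcal{U}_\beta$. Let $u_0 = U_\beta f_0$ for a bounded strictly positive measurable $f_0$, and suppose there exists a constant $k > 0$ with $k \leq u_0$. If there exists a $\mathcal{U}_\beta$-excessive function $v$, finite $\lambda$-a.e. for a finite measure $\lambda$, such that $[v \leq \alpha]$ is relatively compact for all $\alpha > 0$ (a compact Lyapunov function), then the capacity $c_\lambda(M) := \inf\{\lambda(R^G_\beta u_0): G \text{ open}, M \subseteq G\}$ is tight: there is an increasing sequence of compacts $(K_n)$ with $\inf_n c_\lambda(E \setminus K_n) = 0$. -/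
/-!
Let `N + 1` bound `u₀ = U_β f₀` (possible as `f₀` is bounded and `β U_β 1 ≤ 1`), and let `K n` be
the closure of `[v ≤ (N + 1)(n + 1)]`, compact by hypothesis. Off `K n` both the constant `N + 1`
and `v / (n + 1)` are excessive majorants of `u₀`, so the reduced function, an infimum of such
majorants, lies below `min (N + 1) (v / (n + 1))`. These minima are dominated by `N + 1`, which is
`λ`-integrable, and tend to `0` wherever `v < ∞`, that is `λ`-a.e.
-/

open MeasureTheory
open scoped ENNReal

noncomputable section

/-- The cone of `𝒰_β`-excessive functions (`ℝ≥0∞`-valued): measurable `u` with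
`α U_{β+α} u ≤ u` for all `α > 0` and `sup_α α U_{β+α} u = u` pointwise. -/
def exc {E : Type*} [MeasurableSpace E]
    (U : ℝ → (E → ℝ≥0∞) → (E → ℝ≥0∞)) (β : ℝ) : Set (E → ℝ≥0∞) :=
  {u | Measurable u ∧
    (∀ α : ℝ, 0 < α → ∀ x, ENNReal.ofReal α * U (β + α) u x ≤ u x) ∧
    ∀ x, (⨆ α ∈ Set.Ioi (0:ℝ), ENNReal.ofReal α * U (β + α) u x) = u x}

/-- The reduced function `R^M_β u = inf { w excessive : w ≥ u on M }`. -/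
def reduced {E : Type*} [MeasurableSpace E]
    (U : ℝ → (E → ℝ≥0∞) → (E → ℝ≥0∞)) (β : ℝ) (M : Set E) (u : E → ℝ≥0∞) : E → ℝ≥0∞ :=
  fun x => ⨅ w ∈ {w ∈ exc U β | ∀ y ∈ M, u y ≤ w y}, w x

/-- The capacity `c_λ(M) = inf { λ(R^G_β u₀) : G open, M ⊆ G }`. -/
def cap {E : Type*} [TopologicalSpace E] [MeasurableSpace E]
    (U : ℝ → (E → ℝ≥0∞) → (E → ℝ≥0∞)) (β : ℝ) (u₀ : E → ℝ≥0∞)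
    (lam : Measure E) (M : Set E) : ℝ≥0∞ :=
  ⨅ G ∈ {G : Set E | IsOpen G ∧ M ⊆ G}, ∫⁻ x, reduced U β G u₀ x ∂lam

section AdditiveMap

variable {E : Type*} {T : (E → ℝ≥0∞) → (E → ℝ≥0∞)}

lemma map_natCast_add_one_smul_of_map_add (hadd : ∀ f g, T (f + g) = T f + T g)
    (n : ℕ) (f : E → ℝ≥0∞) : T (((n : ℝ≥0∞) + 1) • f) = ((n : ℝ≥0∞) + 1) • T f := by
  induction n with
  | zero => simp
  | succ n ih =>
    rw [Nat.cast_succ, add_smul _ 1 f, add_smul _ 1 (T f), one_smul, one_smul, hadd, ih]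

lemma map_inv_natCast_add_one_smul_of_map_add (hadd : ∀ f g, T (f + g) = T f + T g)
    (n : ℕ) (f : E → ℝ≥0∞) : T (((n : ℝ≥0∞) + 1)⁻¹ • f) = ((n : ℝ≥0∞) + 1)⁻¹ • T f := by
  have hn : ((n : ℝ≥0∞) + 1) ≠ 0 := by positivity
  have hn' : ((n : ℝ≥0∞) + 1) ≠ ⊤ := by finiteness
  have key := map_natCast_add_one_smul_of_map_add hadd n (((n : ℝ≥0∞) + 1)⁻¹ • f)
  rw [smul_smul, ENNReal.mul_inv_cancel hn hn', one_smul] at key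
  rw [key, smul_smul, ENNReal.inv_mul_cancel hn hn', one_smul]

end AdditiveMap

section Excessive

variable {E : Type*} [MeasurableSpace E] {U : ℝ → (E → ℝ≥0∞) → (E → ℝ≥0∞)} {β : ℝ}

lemma smul_mem_exc {u : E → ℝ≥0∞} (hu : u ∈ exc U β) (c : ℝ≥0∞)
    (hc : ∀ α : ℝ, 0 < α → U (β + α) (c • u) = c • U (β + α) u) : c • u ∈ exc U β := by
  obtain ⟨hmeas, hle, hsup⟩ := hu
  refine ⟨hmeas.const_smul c, fun α hα x => ?_, fun x => ?_⟩
  · rw [hc α hα, Pi.smul_apply, Pi.smul_apply, smul_eq_mul, smul_eq_mul, mul_left_comm]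
    gcongr
    exact hle α hα x
  · have hpull : ∀ α ∈ Set.Ioi (0 : ℝ),
        ENNReal.ofReal α * U (β + α) (c • u) x = c * (ENNReal.ofReal α * U (β + α) u x) :=
      fun α hα => by rw [hc α hα, Pi.smul_apply, smul_eq_mul, mul_left_comm]
    rw [biSup_congr hpull, Pi.smul_apply, smul_eq_mul, ← hsup x]
    simp_rw [ENNReal.mul_iSup]

lemma natCast_add_one_mem_exc (hone : (fun _ : E => (1 : ℝ≥0∞)) ∈ exc U β)
    (hadd : ∀ α : ℝ, 0 < α → ∀ f g, U (β + α) (f + g) = U (β + α) f + U (β + α) g) (n : ℕ) :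
    (fun _ : E => (n : ℝ≥0∞) + 1) ∈ exc U β := by
  have h := smul_mem_exc hone ((n : ℝ≥0∞) + 1)
    fun α hα => map_natCast_add_one_smul_of_map_add (hadd α hα) n _
  convert h using 1
  funext x
  simp

lemma inv_natCast_add_one_smul_mem_exc {v : E → ℝ≥0∞} (hv : v ∈ exc U β)
    (hadd : ∀ α : ℝ, 0 < α → ∀ f g, U (β + α) (f + g) = U (β + α) f + U (β + α) g) (n : ℕ) :
    ((n : ℝ≥0∞) + 1)⁻¹ • v ∈ exc U β :=
  smul_mem_exc hv _ fun α hα => map_inv_natCast_add_one_smul_of_map_add (hadd α hα) n _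

lemma reduced_le {M : Set E} {u w : E → ℝ≥0∞} (hw : w ∈ exc U β) (hM : ∀ y ∈ M, u y ≤ w y)
    (x : E) : reduced U β M u x ≤ w x :=
  iInf₂_le w ⟨hw, hM⟩

lemma cap_le_lintegral_min [TopologicalSpace E] {G : Set E} (hG : IsOpen G)
    {u w₁ w₂ : E → ℝ≥0∞} (hw₁ : w₁ ∈ exc U β) (hw₂ : w₂ ∈ exc U β)
    (hu₁ : ∀ y ∈ G, u y ≤ w₁ y) (hu₂ : ∀ y ∈ G, u y ≤ w₂ y) (lam : Measure E) :
    cap U β u lam G ≤ ∫⁻ x, min (w₁ x) (w₂ x) ∂lam :=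
  (iInf₂_le G ⟨hG, subset_rfl⟩).trans <| lintegral_mono fun x =>
    le_min (reduced_le hw₁ hu₁ x) (reduced_le hw₂ hu₂ x)

end Excessive

lemma exists_map_le_natCast_add_one_of_bounded {E : Type*} {T : (E → ℝ≥0∞) → (E → ℝ≥0∞)} {γ : ℝ}
    (hγ : 0 < γ) (hmono : ∀ f g, f ≤ g → T f ≤ T g) (hadd : ∀ f g, T (f + g) = T f + T g)
    (hsub : ∀ x, ENNReal.ofReal γ * T (fun _ => 1) x ≤ 1) {f : E → ℝ≥0∞}
    (hf : ∃ C : ℝ≥0∞, C < ⊤ ∧ ∀ x, f x ≤ C) : ∃ N : ℕ, ∀ x, T f x ≤ N + 1 := by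
  obtain ⟨C, hC, hfC⟩ := hf
  obtain ⟨M, hM⟩ := ENNReal.exists_nat_gt hC.ne
  obtain ⟨N, hN⟩ := ENNReal.exists_nat_gt
    (r := ((M : ℝ≥0∞) + 1) * (ENNReal.ofReal γ)⁻¹) (by finiteness)
  refine ⟨N, fun x => ?_⟩
  have hT1 : T (fun _ => 1) x ≤ (ENNReal.ofReal γ)⁻¹ :=
    ENNReal.le_inv_iff_mul_le.mpr ((mul_comm _ _).trans_le (hsub x))
  calc T f x ≤ T (((M : ℝ≥0∞) + 1) • fun _ => 1) x :=
        hmono _ _ (fun y => by simpa using (hfC y).trans (hM.le.trans le_self_add)) x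
    _ = ((M : ℝ≥0∞) + 1) * T (fun _ => 1) x := by
        rw [map_natCast_add_one_smul_of_map_add hadd]; rfl
    _ ≤ ((M : ℝ≥0∞) + 1) * (ENNReal.ofReal γ)⁻¹ := by gcongr
    _ ≤ N + 1 := hN.le.trans le_self_add

lemma iInf_lintegral_min_inv_natCast_add_one_mul_eq_zero {E : Type*} [MeasurableSpace E]
    {μ : Measure E} [IsFiniteMeasure μ] {a : ℝ≥0∞} (ha : a ≠ ⊤) {v : E → ℝ≥0∞}
    (hv : Measurable v) (hfin : ∀ᵐ x ∂μ, v x < ⊤) :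
    ⨅ n : ℕ, ∫⁻ x, min a (((n : ℝ≥0∞) + 1)⁻¹ * v x) ∂μ = 0 := by
  have hinv : Filter.Tendsto (fun n : ℕ => ((n : ℝ≥0∞) + 1)⁻¹) Filter.atTop (nhds 0) := by
    simpa [Function.comp_def] using
      ENNReal.tendsto_inv_nat_nhds_zero.comp (Filter.tendsto_add_atTop_nat 1)
  have hpointwise : ∀ᵐ x ∂μ, Filter.Tendsto (fun n : ℕ => min a (((n : ℝ≥0∞) + 1)⁻¹ * v x))
      Filter.atTop (nhds 0) := hfin.mono fun x hx => by
    simpa using tendsto_const_nhds.min (ENNReal.Tendsto.mul_const hinv (Or.inr hx.ne))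
  have hlim := tendsto_lintegral_of_dominated_convergence (fun _ => a)
    (fun n => measurable_const.min (hv.const_mul _)) (fun n => ae_of_all _ fun x => min_le_left _ _)
    (by rw [lintegral_const]; exact ENNReal.mul_ne_top ha (measure_ne_top _ _)) hpointwise
  rw [lintegral_zero] at hlim
  exact nonpos_iff_eq_zero.mp (ge_of_tendsto' hlim fun n => iInf_le _ n)

theorem stmt18_general {E : Type*} [TopologicalSpace E] [MeasurableSpace E]
    (U : ℝ → (E → ℝ≥0∞) → (E → ℝ≥0∞)) (β : ℝ) (hβ : 0 < β)
    (hmono : ∀ α : ℝ, 0 < α → ∀ f g : E → ℝ≥0∞, f ≤ g → U α f ≤ U α g)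
    (hadd : ∀ α : ℝ, 0 < α → ∀ f g : E → ℝ≥0∞, U α (f + g) = U α f + U α g)
    (hsub : ∀ α : ℝ, 0 < α → ∀ x, ENNReal.ofReal α * U α (fun _ => 1) x ≤ 1)
    -- all points of `E` are non-branch points with respect to `𝒰_β`:
    (hone : (fun _ : E => (1 : ℝ≥0∞)) ∈ exc U β)
    -- `u₀ = U_β f₀` with `f₀` bounded, strictly positive, measurable, and `k ≤ u₀`:
    (f₀ : E → ℝ≥0∞) (hf₀b : ∃ C : ℝ≥0∞, C < ⊤ ∧ ∀ x, f₀ x ≤ C)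
    -- a finite measure `λ` and a compact Lyapunov function `v`:
    (lam : Measure E) [IsFiniteMeasure lam]
    (v : E → ℝ≥0∞) (hv : v ∈ exc U β) (hvfin : ∀ᵐ x ∂lam, v x < ⊤)
    (hvcpt : ∀ α : ℝ≥0∞, 0 < α → α < ⊤ → IsCompact (closure {x : E | v x ≤ α})) :
    ∃ K : ℕ → Set E, Monotone K ∧ (∀ n, IsCompact (K n)) ∧
      (⨅ n : ℕ, cap U β (U β f₀) lam (K n)ᶜ) = 0 := by
  obtain ⟨N, hN⟩ :=
    exists_map_le_natCast_add_one_of_bounded hβ (hmono β hβ) (hadd β hβ) (hsub β hβ) hf₀b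
  have hadd' : ∀ α : ℝ, 0 < α → ∀ f g, U (β + α) (f + g) = U (β + α) f + U (β + α) g :=
    fun α hα => hadd (β + α) (by linarith)
  let K : ℕ → Set E := fun n => closure {x | v x ≤ ((N : ℝ≥0∞) + 1) * ((n : ℝ≥0∞) + 1)}
  have hu₀_le : ∀ n, ∀ y ∈ (K n)ᶜ, U β f₀ y ≤ ((n : ℝ≥0∞) + 1)⁻¹ * v y := fun n y hy => by
    have hvy : ((N : ℝ≥0∞) + 1) * ((n : ℝ≥0∞) + 1) < v y :=
      not_le.mp fun h => hy (subset_closure h)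
    rw [mul_comm, ← div_eq_mul_inv, ENNReal.le_div_iff_mul_le (by simp) (by simp)]
    exact le_trans (by gcongr; exact hN y) hvy.le
  have hK_mono : Monotone K := fun a b hab =>
    closure_mono fun x (hx : v x ≤ _) => (hx.trans (by gcongr) : v x ≤ _)
  refine ⟨K, hK_mono, fun n => hvcpt _ (by positivity) (by finiteness), ?_⟩
  refine nonpos_iff_eq_zero.mp ?_
  calc ⨅ n : ℕ, cap U β (U β f₀) lam (K n)ᶜ
      ≤ ⨅ n : ℕ, ∫⁻ x, min ((N : ℝ≥0∞) + 1) (((n : ℝ≥0∞) + 1)⁻¹ * v x) ∂lam :=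
        iInf_mono fun n => cap_le_lintegral_min isClosed_closure.isOpen_compl
          (natCast_add_one_mem_exc hone hadd' N) (inv_natCast_add_one_smul_mem_exc hv hadd' n)
          (fun y _ => hN y) (hu₀_le n) lam
    _ = 0 := iInf_lintegral_min_inv_natCast_add_one_mul_eq_zero (by finiteness) hv.1 hvfin

/-- existence of a compact Lyapunov function implies tightness of the
capacity `c_λ`. -/
theorem stmt18 {E : Type*} [TopologicalSpace E] [MeasurableSpace E] [BorelSpace E]
    (U : ℝ → (E → ℝ≥0∞) → (E → ℝ≥0∞)) (β : ℝ) (hβ : 0 < β)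
    (hmono : ∀ α : ℝ, 0 < α → ∀ f g : E → ℝ≥0∞, f ≤ g → U α f ≤ U α g)
    (hadd : ∀ α : ℝ, 0 < α → ∀ f g : E → ℝ≥0∞, U α (f + g) = U α f + U α g)
    (hmeas : ∀ α : ℝ, 0 < α → ∀ f : E → ℝ≥0∞, Measurable f → Measurable (U α f))
    (hsub : ∀ α : ℝ, 0 < α → ∀ x, ENNReal.ofReal α * U α (fun _ => 1) x ≤ 1)
    (hres : ∀ α γ : ℝ, 0 < α → α < γ → ∀ (f : E → ℝ≥0∞) (x : E),
      U α f x = U γ f x + ENNReal.ofReal (γ - α) * U α (U γ f) x)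
    -- all points of `E` are non-branch points with respect to `𝒰_β`:
    (hone : (fun _ : E => (1 : ℝ≥0∞)) ∈ exc U β)
    (hnonbranch : ∀ u ∈ exc U β, ∀ v ∈ exc U β, ∀ x : E,
      min (u x) (v x) =
        ⨆ α ∈ Set.Ioi (0:ℝ), ENNReal.ofReal α * U (β + α) (fun y => min (u y) (v y)) x)
    -- `u₀ = U_β f₀` with `f₀` bounded, strictly positive, measurable, and `k ≤ u₀`:
    (f₀ : E → ℝ≥0∞) (hf₀m : Measurable f₀) (hf₀b : ∃ C : ℝ≥0∞, C < ⊤ ∧ ∀ x, f₀ x ≤ C)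
    (hf₀pos : ∀ x, 0 < f₀ x)
    (k : ℝ≥0∞) (hk : 0 < k) (hku₀ : ∀ x, k ≤ U β f₀ x)
    -- a finite measure `λ` and a compact Lyapunov function `v`:
    (lam : Measure E) [IsFiniteMeasure lam]
    (v : E → ℝ≥0∞) (hv : v ∈ exc U β) (hvfin : ∀ᵐ x ∂lam, v x < ⊤)
    (hvcpt : ∀ α : ℝ≥0∞, 0 < α → α < ⊤ → IsCompact (closure {x : E | v x ≤ α})) :
    ∃ K : ℕ → Set E, Monotone K ∧ (∀ n, IsCompact (K n)) ∧
      (⨅ n : ℕ, cap U β (U β f₀) lam (K n)ᶜ) = 0 :=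
  stmt18_general U β hβ hmono hadd hsub hone f₀ hf₀b lam v hv hvfin hvcpt

end
end
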